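/- For every natural number n ≥ 2, every real number x ≥ 1, and every natural number m, the truncated nth-root nested radical satisfies R m x ≤ x + 1, and the sequence m ↦ R m x is monotonically increasing in m. -/
import Mathlib

noncomputable def R (n : ℕ) : ℕ → ℝ → ℝ
  | 0, _ => 0
  | m + 1, y =>
      (∑ k ∈ Finset.range (n - 1), (n.choose k : ℝ) * y ^ k
        + y ^ (n - 1) * R n m (y + n - 1)) ^ (1 / n : ℝ)

lemma R_nonneg (n : ℕ) (hn : 2 ≤ n) : ∀ m : ℕ, ∀ y : ℝ, 0 ≤ y → 0 ≤ R n m y := by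
  intro m
  induction m with
  | zero => intro y hy; simp [R]
  | succ m ih =>
    intro y hy
    have hn2 : (2:ℝ) ≤ (n:ℝ) := by exact_mod_cast hn
    simp only [R]
    apply Real.rpow_nonneg
    have h1 : 0 ≤ y + n - 1 := by linarith
    have := ih (y + n - 1) h1
    have hsum : 0 ≤ ∑ k ∈ Finset.range (n - 1), (n.choose k : ℝ) * y ^ k :=
      Finset.sum_nonneg fun k _ => mul_nonneg (by positivity) (pow_nonneg hy k)
    nlinarith [pow_nonneg hy (n-1)]

lemma base_nonneg (n : ℕ) (hn : 2 ≤ n) (m : ℕ) (y : ℝ) (hy : 1 ≤ y) :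
    0 ≤ ∑ k ∈ Finset.range (n - 1), (n.choose k : ℝ) * y ^ k
        + y ^ (n - 1) * R n m (y + n - 1) := by
  have hn2 : (2:ℝ) ≤ (n:ℝ) := by exact_mod_cast hn
  have hy0 : (0:ℝ) ≤ y := by linarith
  have h1 : 0 ≤ y + n - 1 := by linarith
  have hR := R_nonneg n hn m (y + n - 1) h1
  have hsum : 0 ≤ ∑ k ∈ Finset.range (n - 1), (n.choose k : ℝ) * y ^ k :=
    Finset.sum_nonneg fun k _ => mul_nonneg (by positivity) (pow_nonneg hy0 k)
  nlinarith [pow_nonneg hy0 (n-1)]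

lemma R_le (n : ℕ) (hn : 2 ≤ n) : ∀ m : ℕ, ∀ y : ℝ, 1 ≤ y → R n m y ≤ y + 1 := by
  intro m
  induction m with
  | zero => intro y hy; simp only [R]; linarith
  | succ m ih =>
    intro y hy
    have hn2 : (2:ℝ) ≤ (n:ℝ) := by exact_mod_cast hn
    have hy0 : (0:ℝ) ≤ y := by linarith
    have hy1 : (1:ℝ) ≤ y + n - 1 := by linarith
    have hb0 := base_nonneg n hn m y hy
    have hkey : ∑ k ∈ Finset.range (n - 1), (n.choose k : ℝ) * y ^ k
        + y ^ (n - 1) * R n m (y + n - 1) ≤ (y + 1) ^ n := by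
      have hRle : R n m (y + n - 1) ≤ y + n := by
        have := ih (y + n - 1) hy1; linarith
      have hexp : (y + 1) ^ n = ∑ k ∈ Finset.range (n - 1), (n.choose k : ℝ) * y ^ k
          + y ^ (n - 1) * (y + n) := by
        obtain ⟨p, rfl⟩ : ∃ p, n = p + 2 := ⟨n - 2, by omega⟩
        rw [add_pow]
        simp only [one_pow, mul_one]
        rw [show p + 2 + 1 = (p + 1) + 1 + 1 from rfl, Finset.sum_range_succ,
          Finset.sum_range_succ]
        have h1 : ((p+2).choose (p+1) : ℝ) = (p+2 : ℕ) := by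
          rw [Nat.choose_succ_self_right]
        have h2 : ((p+2).choose (p+2) : ℝ) = 1 := by simp
        have hs : ∑ k ∈ Finset.range (p+1), y ^ k * ((p+2).choose k : ℝ)
            = ∑ k ∈ Finset.range (p+1), ((p+2).choose k : ℝ) * y ^ k :=
          Finset.sum_congr rfl fun k _ => mul_comm _ _
        rw [h1, h2, hs, show p + 2 - 1 = p + 1 from rfl]
        push_cast
        ring
      rw [hexp]
      have hpw : (0:ℝ) ≤ y ^ (n - 1) := pow_nonneg hy0 _
      nlinarith
    have hcalc : R n (m + 1) y
        = (∑ k ∈ Finset.range (n - 1), (n.choose k : ℝ) * y ^ k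
          + y ^ (n - 1) * R n m (y + n - 1)) ^ (1 / n : ℝ) := rfl
    rw [hcalc]
    calc (∑ k ∈ Finset.range (n - 1), (n.choose k : ℝ) * y ^ k
          + y ^ (n - 1) * R n m (y + n - 1)) ^ (1 / n : ℝ)
        ≤ ((y + 1) ^ n) ^ (1 / n : ℝ) := Real.rpow_le_rpow hb0 hkey (by positivity)
      _ = y + 1 := by
          rw [← Real.rpow_natCast (y + 1) n, ← Real.rpow_mul (by linarith),
            mul_one_div, div_self (by positivity), Real.rpow_one]

lemma R_step (n : ℕ) (hn : 2 ≤ n) : ∀ m : ℕ, ∀ y : ℝ, 1 ≤ y → R n m y ≤ R n (m + 1) y := by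
  intro m
  induction m with
  | zero =>
    intro y hy
    have : R n 0 y = 0 := rfl
    rw [this]
    exact R_nonneg n hn 1 y (by linarith)
  | succ m ih =>
    intro y hy
    have hn2 : (2:ℝ) ≤ (n:ℝ) := by exact_mod_cast hn
    have hy1 : (1:ℝ) ≤ y + n - 1 := by linarith
    have h1 : R n (m + 1) y
        = (∑ k ∈ Finset.range (n - 1), (n.choose k : ℝ) * y ^ k
          + y ^ (n - 1) * R n m (y + n - 1)) ^ (1 / n : ℝ) := rfl
    have h2 : R n (m + 2) y
        = (∑ k ∈ Finset.range (n - 1), (n.choose k : ℝ) * y ^ k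
          + y ^ (n - 1) * R n (m + 1) (y + n - 1)) ^ (1 / n : ℝ) := rfl
    rw [h1, h2]
    apply Real.rpow_le_rpow (base_nonneg n hn m y hy) _ (by positivity)
    have := ih (y + n - 1) hy1
    have hpw : (0:ℝ) ≤ y ^ (n - 1) := pow_nonneg (by linarith) _
    nlinarith

theorem nested_nth_root_bounded_monotone (n : ℕ) (hn : 2 ≤ n) (x : ℝ) (hx : 1 ≤ x) :
    (∀ m : ℕ, R n m x ≤ x + 1) ∧ Monotone (fun m => R n m x) := by
  exact ⟨fun m => R_le n hn m x hx,
    monotone_nat_of_le_succ fun m => R_step n hn m x hx⟩
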